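/- Let ν₁, ν₂ be probability measures on a metric space (X, d) and let q be any coupling between ν₁ and ν₂. Then ∫_{X×X} d(x₁, x₂) dq(x₁, x₂) ≥ ∫∫ d(x₁, x₂) dν₁(x₁) dν₂(x₂) − √Var(ν₂). In particular, d_{W₁}(ν₁, ν₂) ≥ ∫∫ d dν₁ dν₂ − √Var(ν₂). -/

import Mathlib

/-!
Let `F x = ∫ d(x, y) dν₂(y)`. By the triangle inequality `F` is 1-Lipschitz, so integrating
`F x₁ ≤ F x₂ + d(x₁, x₂)` against a coupling `q` gives `∫ F dν₁ ≤ ∫ F dν₂ + ∫ d dq`, and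
`∫ F dν₂ ≤ √Var(ν₂)` by Jensen's inequality `(∫ f)² ≤ ∫ f²`, applied once in each variable.
The measurability of `F` comes from its continuity rather than from Tonelli's theorem, so `X`
need not be separable.
-/

open scoped ENNReal

open MeasureTheory

/-- The variance between two measures on a metric space:
`Var(μ, ν) = ∫∫ d²(x, y) dμ(x) dν(y)` (valued in `ℝ≥0∞`, may be `∞`). -/
noncomputable def Var {X : Type*} [MetricSpace X] [MeasurableSpace X]
    (μ ν : Measure X) : ℝ≥0∞ :=
  ∫⁻ x, ∫⁻ y, edist x y ^ 2 ∂ν ∂μ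

/-- The 1-Wasserstein distance: the infimum of `∫ d(x, y) dq(x, y)` over all
couplings `q` of `μ` and `ν` (valued in `ℝ≥0∞`, may be `∞`). -/
noncomputable def W1 {X : Type*} [MetricSpace X] [MeasurableSpace X]
    (μ ν : Measure X) : ℝ≥0∞ :=
  ⨅ (q : Measure (X × X)) (_ : q.map Prod.fst = μ ∧ q.map Prod.snd = ν),
    ∫⁻ p, edist p.1 p.2 ∂q

theorem sq_lintegral_le_lintegral_sq {α : Type*} [MeasurableSpace α] (μ : Measure α)
    [IsProbabilityMeasure μ] {f : α → ℝ≥0∞} (hf : AEMeasurable f μ) :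
    (∫⁻ a, f a ∂μ) ^ 2 ≤ ∫⁻ a, f a ^ 2 ∂μ := by
  have h := ENNReal.lintegral_mul_le_Lp_mul_Lq μ Real.HolderConjugate.two_two hf
    (aemeasurable_const (b := (1 : ℝ≥0∞)))
  simp only [Pi.mul_apply, mul_one, ENNReal.rpow_two, one_pow, ENNReal.one_rpow, lintegral_const,
    measure_univ] at h
  rwa [one_div, ENNReal.le_rpow_inv_iff two_pos, ENNReal.rpow_two] at h

section

variable {X : Type*} [PseudoEMetricSpace X] [MeasurableSpace X]

theorem lintegral_edist_le_lintegral_edist_add (ν : Measure X) [IsProbabilityMeasure ν]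
    (x x' : X) : ∫⁻ y, edist x y ∂ν ≤ ∫⁻ y, edist x' y ∂ν + edist x x' :=
  calc ∫⁻ y, edist x y ∂ν ≤ ∫⁻ y, edist x' y + edist x x' ∂ν :=
        lintegral_mono fun y => (edist_triangle x x' y).trans_eq (add_comm _ _)
    _ = ∫⁻ y, edist x' y ∂ν + edist x x' := by
        rw [lintegral_add_right _ measurable_const, lintegral_const, measure_univ, mul_one]

theorem continuous_lintegral_edist (ν : Measure X) [IsProbabilityMeasure ν] :
    Continuous fun x => ∫⁻ y, edist x y ∂ν :=
  continuous_of_le_add_edist 1 ENNReal.one_ne_top fun x x' => by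
    simpa only [one_mul] using lintegral_edist_le_lintegral_edist_add ν x x'

theorem lintegral_map_fst_le_lintegral_map_snd_add (q : Measure (X × X)) {f : X → ℝ≥0∞}
    (hf : Measurable f) (hlip : ∀ x y, f x ≤ f y + edist x y) :
    ∫⁻ x, f x ∂q.map Prod.fst ≤ ∫⁻ x, f x ∂q.map Prod.snd + ∫⁻ p, edist p.1 p.2 ∂q := by
  rw [lintegral_map hf measurable_fst, lintegral_map hf measurable_snd]
  exact (lintegral_mono fun p : X × X => hlip p.1 p.2).trans_eq
    (lintegral_add_left (hf.comp measurable_snd) _)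

end

theorem lintegral_lintegral_edist_le_var_rpow {X : Type*} [MetricSpace X] [MeasurableSpace X]
    [OpensMeasurableSpace X] (μ ν : Measure X) [IsProbabilityMeasure μ] [IsProbabilityMeasure ν] :
    ∫⁻ x, ∫⁻ y, edist x y ∂ν ∂μ ≤ Var μ ν ^ (1 / 2 : ℝ) := by
  rw [one_div, ENNReal.le_rpow_inv_iff two_pos, ENNReal.rpow_two]
  calc (∫⁻ x, ∫⁻ y, edist x y ∂ν ∂μ) ^ 2
      ≤ ∫⁻ x, (∫⁻ y, edist x y ∂ν) ^ 2 ∂μ :=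
        sq_lintegral_le_lintegral_sq μ (continuous_lintegral_edist ν).measurable.aemeasurable
    _ ≤ Var μ ν := lintegral_mono fun x =>
        sq_lintegral_le_lintegral_sq ν (continuous_const.edist continuous_id).aemeasurable

theorem lintegral_lintegral_edist_le_lintegral_edist_add_var_rpow {X : Type*} [MetricSpace X]
    [MeasurableSpace X] [OpensMeasurableSpace X] (q : Measure (X × X))
    [IsProbabilityMeasure (q.map Prod.snd)] :
    ∫⁻ x, ∫⁻ y, edist x y ∂q.map Prod.snd ∂q.map Prod.fst
      ≤ (∫⁻ p, edist p.1 p.2 ∂q) + Var (q.map Prod.snd) (q.map Prod.snd) ^ (1 / 2 : ℝ) := by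
  set ν := q.map Prod.snd
  calc ∫⁻ x, ∫⁻ y, edist x y ∂ν ∂q.map Prod.fst
      ≤ ∫⁻ x, ∫⁻ y, edist x y ∂ν ∂ν + ∫⁻ p, edist p.1 p.2 ∂q :=
        lintegral_map_fst_le_lintegral_map_snd_add q (continuous_lintegral_edist ν).measurable
          (lintegral_edist_le_lintegral_edist_add ν)
    _ ≤ Var ν ν ^ (1 / 2 : ℝ) + ∫⁻ p, edist p.1 p.2 ∂q :=
        add_le_add_left (lintegral_lintegral_edist_le_var_rpow ν ν) _
    _ = _ := add_comm _ _

theorem coupling_int_ge_double_int_sub_sqrt_var_general {X : Type*} [MetricSpace X]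
    [MeasurableSpace X] [BorelSpace X]
    (ν₁ ν₂ : Measure X) [IsProbabilityMeasure ν₂]
    (q : Measure (X × X)) (hq : q.map Prod.fst = ν₁ ∧ q.map Prod.snd = ν₂) :
    (∫⁻ x, ∫⁻ y, edist x y ∂ν₂ ∂ν₁
        ≤ (∫⁻ p, edist p.1 p.2 ∂q) + Var ν₂ ν₂ ^ (1 / 2 : ℝ)) ∧
      (∫⁻ x, ∫⁻ y, edist x y ∂ν₂ ∂ν₁ ≤ W1 ν₁ ν₂ + Var ν₂ ν₂ ^ (1 / 2 : ℝ)) := by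
  have le_of_coupling : ∀ q' : Measure (X × X), q'.map Prod.fst = ν₁ ∧ q'.map Prod.snd = ν₂ →
      ∫⁻ x, ∫⁻ y, edist x y ∂ν₂ ∂ν₁ ≤ (∫⁻ p, edist p.1 p.2 ∂q') + Var ν₂ ν₂ ^ (1 / 2 : ℝ) := by
    rintro q' ⟨rfl, rfl⟩
    exact lintegral_lintegral_edist_le_lintegral_edist_add_var_rpow q'
  refine ⟨le_of_coupling q hq, ?_⟩
  simp only [W1, ENNReal.iInf_add]
  exact le_iInf₂ le_of_coupling

/-- For any coupling `q` of `ν₁, ν₂`, one has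
`∫ d dq ≥ ∫∫ d dν₁ dν₂ − √Var(ν₂)` (stated as `∫∫ d dν₁ dν₂ ≤ ∫ d dq + √Var(ν₂)`),
and in particular `∫∫ d dν₁ dν₂ ≤ d_{W₁}(ν₁, ν₂) + √Var(ν₂)`. -/
theorem coupling_int_ge_double_int_sub_sqrt_var {X : Type*} [MetricSpace X]
    [MeasurableSpace X] [BorelSpace X]
    (ν₁ ν₂ : Measure X) [IsProbabilityMeasure ν₁] [IsProbabilityMeasure ν₂]
    (q : Measure (X × X)) (hq : q.map Prod.fst = ν₁ ∧ q.map Prod.snd = ν₂) :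
    (∫⁻ x, ∫⁻ y, edist x y ∂ν₂ ∂ν₁
        ≤ (∫⁻ p, edist p.1 p.2 ∂q) + Var ν₂ ν₂ ^ (1 / 2 : ℝ)) ∧
      (∫⁻ x, ∫⁻ y, edist x y ∂ν₂ ∂ν₁ ≤ W1 ν₁ ν₂ + Var ν₂ ν₂ ^ (1 / 2 : ℝ)) :=
  coupling_int_ge_double_int_sub_sqrt_var_general ν₁ ν₂ q hq
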